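/- Let n ≥ 2 and let b_1, …, b_n be complex weights with b_n ≠ 0. Let F^0 be the sequence generated from initial conditions (0, …, 0, 1) and suppose there exist k_0 ∈ ℕ and Φ ∈ ℂ with Φ ≠ 0 such that F^0(k) ≠ 0 for all k > k_0 and F^0(k+1)/F^0(k) → Φ as k → ∞. Let a = (a_0, …, a_{n-1}) ∈ ℂ^n be initial conditions such that the generated sequence F^a satisfies F^a(k) ≠ 0 for all sufficiently large k, and such that the complex number a_{n-1} + Σ_{i=1}^{n-1} a_{n-1-i} · Σ_{j=1}^{n-i} b_{i+j}·Φ^{−j} is nonzero. Then F^a(k+1)/F^a(k) → Φ as k → ∞. -/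

import Mathlib

/-!
Sliding the window of initial values one step at a time shows that for `k ≥ n - 1`,
`Fa k = ∑_{j<n} c_j * F0 (k - j)`, where `c_0 = a (n - 1)` and
`c_j = ∑_{i=1}^{n-j} b (i + j) * a (n - 1 - i)`. Since `F0 (k - j) / F0 k → Φ⁻¹ ^ j`,
`Fa k / F0 k` tends to `∑_j c_j * Φ⁻¹ ^ j`, which after exchanging the order of summation is the
nonzero quantity of the hypothesis; so `Fa` is asymptotic to a nonzero multiple of `F0` and
inherits its ratio limit.
-/

open Finset Filter Topology

lemma Finset.sum_Icc_one_eq_sum_range {M : Type*} [AddCommMonoid M] (n : ℕ) (f : ℕ → M) :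
    ∑ i ∈ Icc 1 n, f i = ∑ j ∈ range n, f (j + 1) := by
  rw [range_eq_Ico, sum_Ico_add' f 0 n 1]
  rfl

section Recurrence

variable {R : Type*} [CommRing R] {n : ℕ} {b u : ℕ → R}

def IsLinRecSol (n : ℕ) (b u : ℕ → R) : Prop :=
  ∀ k, n ≤ k → u k = ∑ i ∈ Icc 1 n, b i * u (k - i)

/-- The coefficients of `u` with respect to the shifts of the fundamental solution, read off the
window of `u` ending at index `s` (see `IsLinRecSol.eq_sum_windowCoeff_mul`). -/
def windowCoeff (n : ℕ) (b u : ℕ → R) (s j : ℕ) : R :=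
  if j = 0 then u s else ∑ i ∈ Icc 1 (n - j), b (i + j) * u (s - i)

lemma windowCoeff_congr {v : ℕ → R} {s : ℕ} (h : ∀ k ≤ s, u k = v k) :
    windowCoeff n b u s = windowCoeff n b v s := by
  funext j
  simp only [windowCoeff, h s le_rfl, h _ (Nat.sub_le s _)]

lemma windowCoeff_self (hn : 0 < n) (s : ℕ) : windowCoeff n b u s n = 0 := by
  simp [windowCoeff, hn.ne']

lemma sum_Icc_mul_succ_sub (s : ℕ) {j : ℕ} (hj : j < n) :
    ∑ i ∈ Icc 1 (n - j), b (i + j) * u (s + 1 - i)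
      = b (j + 1) * u s + ∑ i ∈ Icc 1 (n - (j + 1)), b (i + (j + 1)) * u (s - i) := by
  obtain ⟨m, hm⟩ : ∃ m, n - j = m + 1 := ⟨n - (j + 1), by omega⟩
  rw [hm, show n - (j + 1) = m by omega, sum_Icc_one_eq_sum_range, sum_range_succ',
    sum_Icc_one_eq_sum_range, add_comm]
  simp only [zero_add, Nat.add_sub_cancel, Nat.add_sub_add_right]
  rw [add_comm 1 j]
  congr 1
  exact sum_congr rfl fun i _ => by ring_nf

lemma IsLinRecSol.windowCoeff_succ (hu : IsLinRecSol n b u) {s j : ℕ} (hs : n ≤ s + 1)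
    (hj : j < n) : windowCoeff n b u (s + 1) j = b (j + 1) * u s + windowCoeff n b u s (j + 1) := by
  rcases Nat.eq_zero_or_pos j with rfl | hj0
  · simpa [windowCoeff, hu (s + 1) hs] using sum_Icc_mul_succ_sub (b := b) (u := u) s hj
  · simpa [windowCoeff, hj0.ne'] using sum_Icc_mul_succ_sub (b := b) (u := u) s hj

variable {F0 : ℕ → R}

theorem IsLinRecSol.eq_sum_windowCoeff_mul (hn : 0 < n) (hu : IsLinRecSol n b u)
    (h0rec : IsLinRecSol n b F0) (h0init : ∀ k < n - 1, F0 k = 0) (h0last : F0 (n - 1) = 1)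
    (m : ℕ) {s : ℕ} (hs : n - 1 ≤ s) :
    u (s + m) = ∑ j ∈ range n, windowCoeff n b u s j * F0 (m + (n - 1) - j) := by
  induction m generalizing s with
  | zero =>
    rw [sum_eq_single_of_mem 0 (mem_range.2 hn)]
    · simp [windowCoeff, h0last]
    · intro j hj hj0
      rw [h0init _ (by rw [mem_range] at hj; omega), mul_zero]
  | succ m ih =>
    -- Moving the window from `s + 1` back to `s` trades the `b (j + 1) * u s` parts of the
    -- coefficients for one more step of the recurrence of `F0`.
    set N := m + (n - 1)
    have hF0 : F0 (N + 1) = ∑ j ∈ range n, b (j + 1) * F0 (N - j) := by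
      rw [h0rec _ (by omega), sum_Icc_one_eq_sum_range]
      simp only [Nat.add_sub_add_right]
    have hshift := sum_range_succ' (fun j => windowCoeff n b u s j * F0 (N + 1 - j)) n
    rw [sum_range_succ, windowCoeff_self hn, zero_mul, add_zero] at hshift
    simp only [Nat.add_sub_add_right] at hshift
    calc u (s + (m + 1)) = u (s + 1 + m) := by rw [add_right_comm, add_assoc]
      _ = ∑ j ∈ range n, (b (j + 1) * u s + windowCoeff n b u s (j + 1)) * F0 (N - j) := by
        rw [ih (by omega)]
        exact sum_congr rfl fun j hj => by
          rw [hu.windowCoeff_succ (by omega) (mem_range.1 hj)]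
      _ = u s * F0 (N + 1) + ∑ j ∈ range n, windowCoeff n b u s (j + 1) * F0 (N - j) := by
        rw [hF0, mul_sum, ← sum_add_distrib]
        exact sum_congr rfl fun j _ => by ring
      _ = ∑ j ∈ range n, windowCoeff n b u s j * F0 (m + 1 + (n - 1) - j) := by
        rw [show m + 1 + (n - 1) = N + 1 by omega, hshift]
        simp [windowCoeff, add_comm]

lemma sum_windowCoeff_mul_pow (hn : 0 < n) (x : R) :
    ∑ j ∈ range n, windowCoeff n b u (n - 1) j * x ^ j
      = u (n - 1) + ∑ i ∈ Icc 1 (n - 1), u (n - 1 - i) *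
          ∑ j ∈ Icc 1 (n - i), b (i + j) * x ^ j := by
  obtain ⟨m, rfl⟩ : ∃ m, n = m + 1 := ⟨n - 1, by omega⟩
  rw [sum_range_succ', add_comm, Nat.add_sub_cancel]
  congr 1
  · simp [windowCoeff]
  · calc ∑ j ∈ range m, windowCoeff (m + 1) b u m (j + 1) * x ^ (j + 1)
        = ∑ j ∈ Icc 1 m, ∑ i ∈ Icc 1 (m + 1 - j), u (m - i) * (b (i + j) * x ^ j) := by
          rw [sum_Icc_one_eq_sum_range]
          refine sum_congr rfl fun j _ => ?_
          rw [windowCoeff, if_neg j.succ_ne_zero, sum_mul]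
          exact sum_congr rfl fun i _ => by ring
      _ = ∑ i ∈ Icc 1 m, u (m - i) * ∑ j ∈ Icc 1 (m + 1 - i), b (i + j) * x ^ j := by
          rw [sum_comm' (t' := Icc 1 m) (s' := fun i => Icc 1 (m + 1 - i))
            (by intro j i; simp only [mem_Icc]; omega)]
          exact sum_congr rfl fun i _ => (mul_sum _ _ _).symm

end Recurrence

section RatioLimit

variable {𝕜 : Type*} [Field 𝕜] [TopologicalSpace 𝕜] [IsTopologicalDivisionRing 𝕜]
  {F G : ℕ → 𝕜} {Φ : 𝕜}

lemma tendsto_sub_div_of_tendsto_succ_div (hΦ : Φ ≠ 0) (hF : ∀ᶠ k in atTop, F k ≠ 0)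
    (h : Tendsto (fun k => F (k + 1) / F k) atTop (𝓝 Φ)) (j : ℕ) :
    Tendsto (fun k => F (k - j) / F k) atTop (𝓝 (Φ⁻¹ ^ j)) := by
  induction j with
  | zero =>
    refine tendsto_const_nhds.congr' ?_
    filter_upwards [hF] with k hk
    rw [pow_zero, Nat.sub_zero, div_self hk]
  | succ j ih =>
    have hstep : Tendsto (fun k => F (k - (j + 1)) / F (k - j)) atTop (𝓝 Φ⁻¹) := by
      refine ((h.inv₀ hΦ).comp (tendsto_sub_atTop_nat (j + 1))).congr' ?_
      filter_upwards [eventually_ge_atTop (j + 1)] with k hk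
      rw [Function.comp_apply, inv_div, show k - (j + 1) + 1 = k - j by omega]
    rw [pow_succ']
    refine (hstep.mul ih).congr' ?_
    filter_upwards [(tendsto_sub_atTop_nat j).eventually hF] with k hk
    exact div_mul_div_cancel₀ hk

lemma tendsto_sum_mul_sub_div (hΦ : Φ ≠ 0) (hF : ∀ᶠ k in atTop, F k ≠ 0)
    (h : Tendsto (fun k => F (k + 1) / F k) atTop (𝓝 Φ)) (s : Finset ℕ) (c : ℕ → 𝕜) :
    Tendsto (fun k => (∑ j ∈ s, c j * F (k - j)) / F k) atTop (𝓝 (∑ j ∈ s, c j * Φ⁻¹ ^ j)) := by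
  simp only [sum_div, mul_div_assoc]
  exact tendsto_finsetSum _ fun j _ =>
    (tendsto_sub_div_of_tendsto_succ_div hΦ hF h j).const_mul (c j)

lemma tendsto_succ_div_of_tendsto_div {L : 𝕜} (hF : ∀ᶠ k in atTop, F k ≠ 0)
    (h : Tendsto (fun k => F (k + 1) / F k) atTop (𝓝 Φ))
    (hG : Tendsto (fun k => G k / F k) atTop (𝓝 L)) (hL : L ≠ 0) :
    Tendsto (fun k => G (k + 1) / G k) atTop (𝓝 Φ) := by
  have hlim := (((tendsto_add_atTop_iff_nat 1).2 hG).mul h).div hG hL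
  rw [mul_div_cancel_left₀ Φ hL] at hlim
  refine hlim.congr' ?_
  filter_upwards [hF, (tendsto_add_atTop_nat 1).eventually hF] with k hk hk1
  rw [Pi.div_apply, div_mul_div_cancel₀ hk1, div_div_div_cancel_right₀ hk]

end RatioLimit

theorem ratio_limit_transfer_general
    (n : ℕ) (hn : 2 ≤ n) (b : ℕ → ℂ)
    (a : ℕ → ℂ) (Fa F0 : ℕ → ℂ)
    (hainit : ∀ k < n, Fa k = a k)
    (harec : ∀ k, n ≤ k → Fa k = ∑ i ∈ Finset.Icc 1 n, b i * Fa (k - i))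
    (h0init : ∀ k < n - 1, F0 k = 0) (h0last : F0 (n - 1) = 1)
    (h0rec : ∀ k, n ≤ k → F0 k = ∑ i ∈ Finset.Icc 1 n, b i * F0 (k - i))
    (Φ : ℂ) (hΦ : Φ ≠ 0)
    (k0 : ℕ) (h0nz : ∀ k > k0, F0 k ≠ 0)
    (h0lim : Filter.Tendsto (fun k => F0 (k + 1) / F0 k) Filter.atTop (nhds Φ))
    (hden : a (n - 1) +
      ∑ i ∈ Finset.Icc 1 (n - 1), a (n - 1 - i) *
        ∑ j ∈ Finset.Icc 1 (n - i), b (i + j) * Φ⁻¹ ^ j ≠ 0) :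
    Filter.Tendsto (fun k => Fa (k + 1) / Fa k) Filter.atTop (nhds Φ) := by
  have hn0 : 0 < n := by omega
  have hF0 : ∀ᶠ k in atTop, F0 k ≠ 0 := eventually_atTop.2 ⟨k0 + 1, fun k hk => h0nz k hk⟩
  set c := windowCoeff n b Fa (n - 1)
  have hrep : ∀ k ≥ n - 1, Fa k = ∑ j ∈ range n, c j * F0 (k - j) := fun k hk => by
    obtain ⟨m, rfl⟩ := Nat.exists_eq_add_of_le hk
    rw [IsLinRecSol.eq_sum_windowCoeff_mul hn0 harec h0rec h0init h0last m le_rfl]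
    exact sum_congr rfl fun j _ => by rw [add_comm]
  have hc : c = windowCoeff n b a (n - 1) :=
    windowCoeff_congr fun k hk => hainit k (by omega)
  refine tendsto_succ_div_of_tendsto_div (L := ∑ j ∈ range n, c j * Φ⁻¹ ^ j) hF0 h0lim ?_
    (by rwa [hc, sum_windowCoeff_mul_pow hn0])
  refine (tendsto_sum_mul_sub_div hΦ hF0 h0lim _ c).congr' ?_
  filter_upwards [eventually_ge_atTop (n - 1)] with k hk
  rw [hrep k hk]

/-- If the fundamental sequence `F0` (from initial conditions
`(0, …, 0, 1)`) is eventually nonzero with ratio limit `Φ ≠ 0`, and `Fa` is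
generated from initial conditions `a` such that `Fa` is eventually nonzero and
`a (n-1) + ∑_{i=1}^{n-1} a (n-1-i) * ∑_{j=1}^{n-i} b (i+j) * Φ⁻ʲ ≠ 0`,
then the ratio of consecutive terms of `Fa` also converges to `Φ`. -/
theorem ratio_limit_transfer
    (n : ℕ) (hn : 2 ≤ n) (b : ℕ → ℂ) (hbn : b n ≠ 0)
    (a : ℕ → ℂ) (Fa F0 : ℕ → ℂ)
    (hainit : ∀ k < n, Fa k = a k)
    (harec : ∀ k, n ≤ k → Fa k = ∑ i ∈ Finset.Icc 1 n, b i * Fa (k - i))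
    (h0init : ∀ k < n - 1, F0 k = 0) (h0last : F0 (n - 1) = 1)
    (h0rec : ∀ k, n ≤ k → F0 k = ∑ i ∈ Finset.Icc 1 n, b i * F0 (k - i))
    (Φ : ℂ) (hΦ : Φ ≠ 0)
    (k0 : ℕ) (h0nz : ∀ k > k0, F0 k ≠ 0)
    (h0lim : Filter.Tendsto (fun k => F0 (k + 1) / F0 k) Filter.atTop (nhds Φ))
    (hanz : ∃ N : ℕ, ∀ k ≥ N, Fa k ≠ 0)
    (hden : a (n - 1) +
      ∑ i ∈ Finset.Icc 1 (n - 1), a (n - 1 - i) *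
        ∑ j ∈ Finset.Icc 1 (n - i), b (i + j) * Φ⁻¹ ^ j ≠ 0) :
    Filter.Tendsto (fun k => Fa (k + 1) / Fa k) Filter.atTop (nhds Φ) :=
  ratio_limit_transfer_general n hn b a Fa F0 hainit harec h0init h0last h0rec Φ hΦ k0 h0nz h0lim
    hden
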